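/- The ETD Euler method is first-order exact on affine problems and, more generally, if u solves u' = L u + N(u) with N Lipschitz, the one-step error of the ETD Euler update u^{n+1} = e^{hL} u(t_n) + h φ_1(hL) N(u(t_n)) satisfies ‖u(t_{n+1}) − u^{n+1}‖ ≤ C h^2, where C depends only on the Lipschitz constant of N and a bound for ‖N(u(t))‖ and ‖u'(t)‖ on [t_n, t_{n+1}], provided the real parts of the eigenvalues of the diagonal matrix L are nonpositive. -/

import Mathlib

/-! On each diagonal entry `c = d i` the system is the scalar equation `v' = c v + g` with
`g = (N ∘ u)_i`. Variation of constants, together with `∫₀ʰ e^{c(h-s)} ds = h φ₁(hc)`, turns the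
ETD Euler defect into `∫ e^{c(t_n+h-t)} (g t - g t_n) dt`. For `Re c ≤ 0` the kernel has modulus at
most `1`, and `‖g t - g t_n‖ ≤ K ‖u t - u t_n‖ ≤ K M₂ h` by the mean value inequality, so the
defect is at most `K M₂ h²`. -/

open Matrix

/-- φ_1 of a matrix, defined via the power series ∑_{k≥0} M^k/(k+1)!. -/
noncomputable def phi1Mat {n : ℕ} (M : Matrix (Fin n) (Fin n) ℂ) : Matrix (Fin n) (Fin n) ℂ :=
  ∑' k : ℕ, ((Nat.factorial (k + 1) : ℂ)⁻¹) • M ^ k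

open Complex Set Nat

noncomputable def phi1 (z : ℂ) : ℂ := ∑' k : ℕ, ((k + 1)! : ℂ)⁻¹ * z ^ k

lemma summable_phi1_series (z : ℂ) : Summable fun k : ℕ => ((k + 1)! : ℂ)⁻¹ * z ^ k := by
  refine .of_norm_bounded (Real.summable_pow_div_factorial ‖z‖) fun k => ?_
  rw [norm_mul, norm_pow, norm_inv, Complex.norm_natCast, div_eq_inv_mul]
  gcongr
  exact k.le_succ

lemma mul_phi1 (z : ℂ) : z * phi1 z = exp z - 1 := by
  have hexp : exp z = ∑' k : ℕ, ((k ! : ℂ))⁻¹ * z ^ k := by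
    simp [Complex.exp_eq_exp_ℂ, NormedSpace.exp_eq_tsum ℂ, smul_eq_mul]
  have hsum : Summable fun k : ℕ => ((k ! : ℂ))⁻¹ * z ^ k := by
    simpa [smul_eq_mul] using NormedSpace.expSeries_summable' (𝕂 := ℂ) z
  rw [hexp, hsum.tsum_eq_zero_add, phi1, ← tsum_mul_left]
  simp only [pow_zero, factorial_zero, cast_one, inv_one, mul_one, add_sub_cancel_left]
  exact tsum_congr fun k => by ring

lemma phi1_zero : phi1 0 = 1 := by
  rw [phi1, tsum_eq_single 0 fun k hk => by simp [zero_pow hk]]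
  simp

lemma integral_exp_mul_ofReal_eq_mul_phi1 (c : ℂ) (h : ℝ) :
    ∫ s in (0 : ℝ)..h, exp (c * s) = h * phi1 (h * c) := by
  rcases eq_or_ne c 0 with rfl | hc
  · simp [phi1_zero]
  · rw [integral_exp_mul_complex hc, div_eq_iff hc, ofReal_zero, mul_zero, exp_zero,
      ← mul_phi1, mul_comm c]
    ring

lemma phi1Mat_diagonal {n : ℕ} (v : Fin n → ℂ) :
    phi1Mat (diagonal v) = diagonal fun i => phi1 (v i) := by
  have hs : Summable fun k : ℕ => ((k + 1)! : ℂ)⁻¹ • v ^ k :=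
    Pi.summable.2 fun i => by simpa [smul_eq_mul] using summable_phi1_series (v i)
  simp_rw [phi1Mat, diagonal_pow, ← diagonal_smul, ← diagonal_tsum]
  congr 1
  funext i
  rw [tsum_apply hs]
  rfl

lemma exp_smul_diagonal {n : ℕ} (d : Fin n → ℂ) (h : ℝ) :
    NormedSpace.exp (h • diagonal d) = diagonal fun i => exp (h * d i) := by
  rw [← diagonal_smul, exp_diagonal]
  congr 1
  funext i
  rw [Pi.coe_exp, ← exp_eq_exp_ℂ, Pi.smul_apply, real_smul]

lemma phi1Mat_smul_diagonal {n : ℕ} (d : Fin n → ℂ) (h : ℝ) :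
    phi1Mat (h • diagonal d) = diagonal fun i => phi1 (h * d i) := by
  rw [← diagonal_smul, phi1Mat_diagonal]
  simp only [Pi.smul_apply, real_smul]

lemma norm_exp_mul_ofReal_le_one {c : ℂ} (hc : c.re ≤ 0) {s : ℝ} (hs : 0 ≤ s) :
    ‖exp (c * s)‖ ≤ 1 := by
  rw [norm_exp, Real.exp_le_one_iff, re_mul_ofReal]
  exact mul_nonpos_of_nonpos_of_nonneg hc hs

section ScalarLinearODE

variable {u g : ℝ → ℂ} {c : ℂ} {a h : ℝ}

theorem variation_of_constants (hh : 0 ≤ h)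
    (hu : ∀ t ∈ Icc a (a + h), HasDerivAt u (c * u t + g t) t)
    (hg : ContinuousOn g (Icc a (a + h))) :
    u (a + h) = exp (h * c) * u a + ∫ t in a..a + h, exp (c * ↑(a + h - t)) * g t := by
  have hw : ∀ t ∈ uIcc a (a + h),
      HasDerivAt (fun s : ℝ => exp (-c * s) * u s) (exp (-c * t) * g t) t := by
    intro t ht
    rw [uIcc_of_le (by linarith)] at ht
    have he : HasDerivAt (fun s : ℝ => exp (-c * s)) (exp (-c * t) * -c) t := by
      simpa using ((hasDerivAt_id (t : ℂ)).const_mul (-c)).comp_ofReal.cexp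
    exact (he.mul (hu t ht)).congr_deriv (by ring)
  have hint : IntervalIntegrable (fun t : ℝ => exp (-c * t) * g t) MeasureTheory.volume a (a + h) :=
    ((by fun_prop : Continuous fun t : ℝ => exp (-c * t)).continuousOn.mul
      hg).intervalIntegrable_of_Icc (by linarith)
  have hshift : ∀ x y : ℝ, exp (c * x) * exp (-c * y) = exp (c * ↑(x - y)) := fun x y => by
    rw [← exp_add]; congr 1; push_cast; ring
  calc u (a + h) = exp (c * ↑(a + h)) * (exp (-c * ↑(a + h)) * u (a + h)) := by
        rw [← mul_assoc, hshift, sub_self, ofReal_zero, mul_zero, exp_zero, one_mul]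
    _ = exp (c * ↑(a + h)) * (exp (-c * a) * u a + ∫ t in a..a + h, exp (-c * t) * g t) := by
        rw [intervalIntegral.integral_eq_sub_of_hasDerivAt hw hint]; ring
    _ = _ := by
        rw [mul_add, ← mul_assoc, hshift, ← intervalIntegral.integral_const_mul]
        simp_rw [← mul_assoc, hshift, add_sub_cancel_left, mul_comm c]

theorem etd_euler_error_eq (hh : 0 ≤ h)
    (hu : ∀ t ∈ Icc a (a + h), HasDerivAt u (c * u t + g t) t)
    (hg : ContinuousOn g (Icc a (a + h))) :
    u (a + h) - (exp (h * c) * u a + h * (phi1 (h * c) * g a))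
      = ∫ t in a..a + h, exp (c * ↑(a + h - t)) * (g t - g a) := by
  have hkernel : Continuous fun t : ℝ => exp (c * ↑(a + h - t)) := by fun_prop
  have hmass : ∫ t in a..a + h, exp (c * ↑(a + h - t)) = h * phi1 (h * c) := by
    rw [intervalIntegral.integral_comp_sub_left (fun s : ℝ => exp (c * s)), sub_self,
      add_sub_cancel_left, integral_exp_mul_ofReal_eq_mul_phi1]
  have hint : IntervalIntegrable (fun t : ℝ => exp (c * ↑(a + h - t)) * g t)
      MeasureTheory.volume a (a + h) :=
    (hkernel.continuousOn.mul hg).intervalIntegrable_of_Icc (by linarith)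
  simp_rw [mul_sub]
  rw [intervalIntegral.integral_sub hint ((hkernel.mul_const (g a)).intervalIntegrable _ _),
    intervalIntegral.integral_mul_const, hmass, variation_of_constants hh hu hg]
  ring

theorem norm_etd_euler_error_le (hc : c.re ≤ 0) (hh : 0 ≤ h)
    (hu : ∀ t ∈ Icc a (a + h), HasDerivAt u (c * u t + g t) t)
    (hg : ContinuousOn g (Icc a (a + h))) {δ : ℝ} (hδ : ∀ t ∈ Icc a (a + h), ‖g t - g a‖ ≤ δ) :
    ‖u (a + h) - (exp (h * c) * u a + h * (phi1 (h * c) * g a))‖ ≤ h * δ := by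
  rw [etd_euler_error_eq hh hu hg]
  have hbound : ∀ t ∈ uIoc a (a + h), ‖exp (c * ↑(a + h - t)) * (g t - g a)‖ ≤ δ := by
    intro t ht
    rw [uIoc_of_le (by linarith)] at ht
    rw [norm_mul, ← one_mul δ]
    exact mul_le_mul (norm_exp_mul_ofReal_le_one hc (by linarith [ht.2]))
      (hδ t (Ioc_subset_Icc_self ht)) (norm_nonneg _) zero_le_one
  simpa [abs_of_nonneg hh, mul_comm] using intervalIntegral.norm_integral_le_of_norm_le_const hbound

end ScalarLinearODE

theorem norm_etd_euler_diagonal_error_le {n : ℕ} {d : Fin n → ℂ} (hd : ∀ i, (d i).re ≤ 0)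
    {u g : ℝ → Fin n → ℂ} {a h δ : ℝ} (hh : 0 ≤ h)
    (hu : ∀ t ∈ Icc a (a + h), HasDerivAt u ((diagonal d).mulVec (u t) + g t) t)
    (hg : ContinuousOn g (Icc a (a + h))) (hδ : ∀ t ∈ Icc a (a + h), ‖g t - g a‖ ≤ δ) :
    ‖u (a + h) - ((NormedSpace.exp (h • diagonal d)).mulVec (u a) +
        h • (phi1Mat (h • diagonal d)).mulVec (g a))‖ ≤ h * δ := by
  have hδ0 : 0 ≤ δ := (norm_nonneg _).trans (hδ a (left_mem_Icc.2 (by linarith)))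
  refine (pi_norm_le_iff_of_nonneg (mul_nonneg hh hδ0)).2 fun i => ?_
  have hui : ∀ t ∈ Icc a (a + h), HasDerivAt (u · i) (d i * u t i + g t i) t := fun t ht => by
    simpa [mulVec_diagonal] using hasDerivAt_pi.1 (hu t ht) i
  simpa [exp_smul_diagonal, phi1Mat_smul_diagonal, mulVec_diagonal, real_smul] using
    norm_etd_euler_error_le (hd i) hh hui ((continuous_apply i).comp_continuousOn hg)
      fun t ht => (norm_le_pi_norm (g t - g a) i).trans (hδ t ht)

theorem etd_euler_one_step_error_general (K M₁ M₂ : ℝ) (hM₂ : 0 ≤ M₂) :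
    ∃ C : ℝ, 0 ≤ C ∧
      ∀ (n : ℕ) (d : Fin n → ℂ), (∀ i, (d i).re ≤ 0) →
        ∀ (N : (Fin n → ℂ) → Fin n → ℂ), LipschitzWith (Real.toNNReal K) N →
          ∀ (u : ℝ → Fin n → ℂ) (tn h : ℝ), 0 < h →
            (∀ t ∈ Set.Icc tn (tn + h),
              HasDerivAt u ((Matrix.diagonal d).mulVec (u t) + N (u t)) t) →
            (∀ t ∈ Set.Icc tn (tn + h), ‖N (u t)‖ ≤ M₁) →
            (∀ t ∈ Set.Icc tn (tn + h),
              ‖(Matrix.diagonal d).mulVec (u t) + N (u t)‖ ≤ M₂) →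
            ‖u (tn + h) -
                ((NormedSpace.exp (h • Matrix.diagonal d)).mulVec (u tn) +
                  h • (phi1Mat (h • Matrix.diagonal d)).mulVec (N (u tn)))‖ ≤ C * h ^ 2 := by
  refine ⟨K.toNNReal * M₂, mul_nonneg K.toNNReal.coe_nonneg hM₂, ?_⟩
  intro n d hd N hN u tn h hh hu _ hderiv_le
  have hdrift : ∀ t ∈ Icc tn (tn + h), ‖N (u t) - N (u tn)‖ ≤ K.toNNReal * M₂ * h := by
    intro t ht
    have hut : ‖u t - u tn‖ ≤ M₂ * (t - tn) :=
      norm_image_sub_le_of_norm_deriv_le_segment' (fun s hs => (hu s hs).hasDerivWithinAt)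
        (fun s hs => hderiv_le s (Ico_subset_Icc_self hs)) t ht
    calc ‖N (u t) - N (u tn)‖ ≤ K.toNNReal * ‖u t - u tn‖ := hN.norm_sub_le _ _
      _ ≤ K.toNNReal * (M₂ * h) := by
        gcongr; exact hut.trans (mul_le_mul_of_nonneg_left (by linarith [ht.2]) hM₂)
      _ = K.toNNReal * M₂ * h := by ring
  have hNu : ContinuousOn (fun t => N (u t)) (Icc tn (tn + h)) :=
    hN.continuous.comp_continuousOn fun t ht => (hu t ht).continuousAt.continuousWithinAt
  calc _ ≤ h * (K.toNNReal * M₂ * h) := norm_etd_euler_diagonal_error_le hd hh.le hu hNu hdrift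
    _ = K.toNNReal * M₂ * h ^ 2 := by ring

/-- One-step error bound for ETD Euler: the local error is O(h²) with a constant depending
only on the Lipschitz constant of N and bounds for ‖N(u(t))‖ and ‖u'(t)‖, provided the
diagonal matrix L has eigenvalues with nonpositive real parts. -/
theorem etd_euler_one_step_error (K M₁ M₂ : ℝ) (hK : 0 ≤ K) (hM₁ : 0 ≤ M₁) (hM₂ : 0 ≤ M₂) :
    ∃ C : ℝ, 0 ≤ C ∧
      ∀ (n : ℕ) (d : Fin n → ℂ), (∀ i, (d i).re ≤ 0) →
        ∀ (N : (Fin n → ℂ) → Fin n → ℂ), LipschitzWith (Real.toNNReal K) N →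
          ∀ (u : ℝ → Fin n → ℂ) (tn h : ℝ), 0 < h →
            (∀ t ∈ Set.Icc tn (tn + h),
              HasDerivAt u ((Matrix.diagonal d).mulVec (u t) + N (u t)) t) →
            (∀ t ∈ Set.Icc tn (tn + h), ‖N (u t)‖ ≤ M₁) →
            (∀ t ∈ Set.Icc tn (tn + h),
              ‖(Matrix.diagonal d).mulVec (u t) + N (u t)‖ ≤ M₂) →
            ‖u (tn + h) -
                ((NormedSpace.exp (h • Matrix.diagonal d)).mulVec (u tn) +
                  h • (phi1Mat (h • Matrix.diagonal d)).mulVec (N (u tn)))‖ ≤ C * h ^ 2 :=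
  etd_euler_one_step_error_general K M₁ M₂ hM₂
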